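/- arXiv:2501.00390 — 5 statements merged into one kernel-verified Lean document; each statement's English description precedes it below -/
import Mathlib

section
/- Let r > 0 and T ≥ 0, and let p, q : [0, T] → ℝ² be continuous paths such that: the second coordinate of p(t) is 0 for all t; the second coordinate of q(t) lies in [−r, r] for all t; the first coordinate of p(0) is at most the first coordinate of q(0); and the first coordinate of q(T) is at most the first coordinate of p(T). Then there exists t* ∈ [0, T] with dist(p(t*), q(t*)) ≤ r; in particular the closed disks of radius r centered at p(t*) and q(t*) intersect, so their union is connected. -/
open Metric Set

theorem EuclideanSpace.dist_eq_abs_sub_of_apply_zero_eq {x y : EuclideanSpace ℝ (Fin 2)}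
    (h : x 0 = y 0) : dist x y = |x 1 - y 1| := by
  rw [EuclideanSpace.dist_eq, Fin.sum_univ_two, h, dist_self, Real.dist_eq,
    zero_pow two_ne_zero, zero_add, Real.sqrt_sq_eq_abs, abs_abs]

theorem isConnected_closedBall_union_closedBall {E : Type*} [SeminormedAddCommGroup E]
    [NormedSpace ℝ E] {x y : E} {r : ℝ} (h : dist x y ≤ r) :
    IsConnected (closedBall x r ∪ closedBall y r) :=
  have hr : 0 ≤ r := dist_nonneg.trans h
  have hball (z : E) : IsConnected (closedBall z r) :=
    (convex_closedBall z r).isConnected (nonempty_closedBall.2 hr)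
  (hball x).union ⟨y, mem_closedBall'.2 h, mem_closedBall_self hr⟩ (hball y)

theorem crossing_paths_collide_general (r T : ℝ) (hT : 0 ≤ T)
    (p q : ℝ → EuclideanSpace ℝ (Fin 2))
    (hp : ContinuousOn p (Icc 0 T)) (hq : ContinuousOn q (Icc 0 T))
    (hp2 : ∀ t ∈ Icc 0 T, p t 1 = 0)
    (hq2 : ∀ t ∈ Icc 0 T, q t 1 ∈ Icc (-r) r)
    (hstart : p 0 0 ≤ q 0 0)
    (hend : q T 0 ≤ p T 0) :
    ∃ t ∈ Icc 0 T, dist (p t) (q t) ≤ r ∧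
      IsConnected (closedBall (p t) r ∪ closedBall (q t) r) := by
  have hp₀ : ContinuousOn (fun t ↦ p t 0) (Icc 0 T) := by fun_prop
  have hq₀ : ContinuousOn (fun t ↦ q t 0) (Icc 0 T) := by fun_prop
  obtain ⟨t, ht, hmeet⟩ := isPreconnected_Icc.intermediate_value₂ (left_mem_Icc.2 hT)
    (right_mem_Icc.2 hT) hp₀ hq₀ hstart hend
  have hd : dist (p t) (q t) ≤ r := by
    rw [EuclideanSpace.dist_eq_abs_sub_of_apply_zero_eq hmeet, hp2 t ht, zero_sub, abs_neg,
      abs_le]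
    exact hq2 t ht
  exact ⟨t, ht, hd, isConnected_closedBall_union_closedBall hd⟩

/-- Intermediate-value collision argument (Case C1 of Lemma 1): if robot `p` moves on the
`x`-axis, robot `q` stays in the horizontal strip of half-width `r`, `p` starts behind `q`
and ends ahead of it, then at some time their centers are within distance `r`, hence the
union of their disks is connected. -/
theorem crossing_paths_collide (r T : ℝ) (hr : 0 < r) (hT : 0 ≤ T)
    (p q : ℝ → EuclideanSpace ℝ (Fin 2))
    (hp : ContinuousOn p (Icc 0 T)) (hq : ContinuousOn q (Icc 0 T))
    (hp2 : ∀ t ∈ Icc 0 T, p t 1 = 0)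
    (hq2 : ∀ t ∈ Icc 0 T, q t 1 ∈ Icc (-r) r)
    (hstart : p 0 0 ≤ q 0 0)
    (hend : q T 0 ≤ p T 0) :
    ∃ t ∈ Icc 0 T, dist (p t) (q t) ≤ r ∧
      IsConnected (closedBall (p t) r ∪ closedBall (q t) r) :=
  crossing_paths_collide_general r T hT p q hp hq hp2 hq2 hstart hend
end

section
/- Let R > r > 0 and ω ≠ 0. Define c₀(t) = (R·cos(ω·t), R·sin(ω·t)), c₁(t) = −c₀(t), and the tangential heading h(t) = (−sin(ω·t), cos(ω·t)). Then for all t ∈ ℝ: (i) dist(c₀(t), c₁(t)) = 2R; (ii) for every τ ≥ 0, ‖c₀(t) + τ·h(t) − c₁(t)‖ ≥ 2R > r and ‖c₁(t) − τ·h(t) − c₀(t)‖ ≥ 2R > r, so neither robot's forward ray meets the closed disk of radius r around the other robot's center; and (iii) the union of the closed disks of radius r centered at c₀(t) and c₁(t) is not connected. -/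
open Real Metric

noncomputable def pt (a b : ℝ) : EuclideanSpace ℝ (Fin 2) := WithLp.toLp 2 ![a, b]

/-!
Write `c` for the position of the first robot and `h` for its heading, so that the second robot
sits at `-c` and moves along `-h`. Since `‖c‖ = R` and `h ⊥ c`, Pythagoras gives
`‖2c + τh‖ ≥ ‖2c‖ = 2R` for every `τ`, which covers both rays. As `r + r < 2R`, the two closed
disks are disjoint nonempty closed sets, so their union is disconnected.
-/

lemma norm_pt (a b : ℝ) : ‖pt a b‖ = √(a ^ 2 + b ^ 2) := by
  rw [EuclideanSpace.norm_eq]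
  simp [pt, Fin.sum_univ_two, sq_abs]

lemma inner_pt (a b c d : ℝ) : inner ℝ (pt a b) (pt c d) = a * c + b * d := by
  simp [pt, EuclideanSpace.inner_toLp_toLp, dotProduct, Fin.sum_univ_two, mul_comm]

lemma norm_pt_polar (R θ : ℝ) : ‖pt (R * cos θ) (R * sin θ)‖ = |R| := by
  rw [norm_pt, mul_pow, mul_pow, ← mul_add, cos_sq_add_sin_sq, mul_one, sqrt_sq_eq_abs]

lemma inner_pt_polar_tangent (R θ : ℝ) :
    inner ℝ (pt (R * cos θ) (R * sin θ)) (pt (-sin θ) (cos θ)) = 0 := by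
  rw [inner_pt]
  ring

lemma norm_le_norm_add_of_inner_eq_zero {F : Type*} [NormedAddCommGroup F]
    [InnerProductSpace ℝ F] {x y : F} (h : inner ℝ x y = 0) : ‖x‖ ≤ ‖x + y‖ :=
  nonneg_le_nonneg_of_sq_le_sq (norm_nonneg _) <| by
    rw [norm_add_sq_eq_norm_sq_add_norm_sq_real h]
    exact le_add_of_nonneg_right (mul_self_nonneg _)

lemma not_isPreconnected_union_closedBall {X : Type*} [PseudoMetricSpace X] {x y : X}
    {r s : ℝ} (hr : 0 ≤ r) (hs : 0 ≤ s) (h : r + s < dist x y) :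
    ¬ IsPreconnected (closedBall x r ∪ closedBall y s) := by
  intro hpre
  rcases (isPreconnected_iff_subset_of_fully_disjoint_closed
      (isClosed_closedBall.union isClosed_closedBall)).1 hpre _ _ isClosed_closedBall
      isClosed_closedBall subset_rfl (closedBall_disjoint_closedBall h) with hx | hy
  · have hyx : dist y x ≤ r := hx (Or.inr (mem_closedBall_self hs))
    rw [dist_comm] at hyx
    linarith
  · have hxy : dist x y ≤ s := hy (Or.inl (mem_closedBall_self hr))
    linarith

theorem antipodal_circle_no_aggregation_general (R r ω : ℝ) (hRr : R > r) (hr : 0 < r) :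
    ∀ t : ℝ,
      dist (pt (R * Real.cos (ω * t)) (R * Real.sin (ω * t)))
        (-(pt (R * Real.cos (ω * t)) (R * Real.sin (ω * t)))) = 2 * R ∧
      (∀ τ : ℝ, 0 ≤ τ →
        ‖pt (R * Real.cos (ω * t)) (R * Real.sin (ω * t)) +
            τ • pt (-Real.sin (ω * t)) (Real.cos (ω * t)) -
            (-(pt (R * Real.cos (ω * t)) (R * Real.sin (ω * t))))‖ ≥ 2 * R ∧
        ‖-(pt (R * Real.cos (ω * t)) (R * Real.sin (ω * t))) -
            τ • pt (-Real.sin (ω * t)) (Real.cos (ω * t)) -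
            pt (R * Real.cos (ω * t)) (R * Real.sin (ω * t))‖ ≥ 2 * R) ∧
      2 * R > r ∧
      ¬ IsConnected (closedBall (pt (R * Real.cos (ω * t)) (R * Real.sin (ω * t))) r ∪
          closedBall (-(pt (R * Real.cos (ω * t)) (R * Real.sin (ω * t)))) r) := by
  intro t
  set c := pt (R * cos (ω * t)) (R * sin (ω * t))
  set h := pt (-sin (ω * t)) (cos (ω * t))
  have hR : 0 < R := hr.trans hRr
  have hc : ‖(2 : ℝ) • c‖ = 2 * R := by
    rw [norm_smul, norm_pt_polar, Real.norm_two, abs_of_pos hR]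
  have hray (τ : ℝ) : 2 * R ≤ ‖c + τ • h - -c‖ := by
    rw [show c + τ • h - -c = (2 : ℝ) • c + τ • h by module, ← hc]
    apply norm_le_norm_add_of_inner_eq_zero
    rw [inner_smul_left, inner_smul_right, inner_pt_polar_tangent, mul_zero, mul_zero]
  have hdist : dist c (-c) = 2 * R := by
    rw [dist_eq_norm, sub_neg_eq_add, ← two_smul ℝ, hc]
  refine ⟨hdist, fun τ _ => ⟨hray τ, ?_⟩, by linarith, fun hconn => ?_⟩
  · rw [show -c - τ • h - c = -(c + τ • h - -c) by module, norm_neg]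
    exact hray τ
  · exact not_isPreconnected_union_closedBall hr.le hr.le (by linarith) hconn.isPreconnected

/-- Counterexample to the implicit assumption in the earlier two-robot proof: two robots
moving antipodally on the same circle of radius `R` with tangential headings stay at
distance `2R`, never see one another (their forward rays miss the other's disk of radius
`r < R`), and never aggregate. -/
theorem antipodal_circle_no_aggregation (R r ω : ℝ) (hRr : R > r) (hr : 0 < r) (hω : ω ≠ 0) :
    ∀ t : ℝ,
      dist (pt (R * Real.cos (ω * t)) (R * Real.sin (ω * t)))
        (-(pt (R * Real.cos (ω * t)) (R * Real.sin (ω * t)))) = 2 * R ∧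
      (∀ τ : ℝ, 0 ≤ τ →
        ‖pt (R * Real.cos (ω * t)) (R * Real.sin (ω * t)) +
            τ • pt (-Real.sin (ω * t)) (Real.cos (ω * t)) -
            (-(pt (R * Real.cos (ω * t)) (R * Real.sin (ω * t))))‖ ≥ 2 * R ∧
        ‖-(pt (R * Real.cos (ω * t)) (R * Real.sin (ω * t))) -
            τ • pt (-Real.sin (ω * t)) (Real.cos (ω * t)) -
            pt (R * Real.cos (ω * t)) (R * Real.sin (ω * t))‖ ≥ 2 * R) ∧
      2 * R > r ∧
      ¬ IsConnected (closedBall (pt (R * Real.cos (ω * t)) (R * Real.sin (ω * t))) r ∪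
          closedBall (-(pt (R * Real.cos (ω * t)) (R * Real.sin (ω * t)))) r) :=
  antipodal_circle_no_aggregation_general R r ω hRr hr
end

section
/- Let r > 0 and let n ≥ 7 be an integer, and set D = r / sin(π/n). Define p_k = (D·cos(2πk/n), D·sin(2πk/n)) for k = 0, …, n−1. Then: (i) for all j ≠ k, ‖p_j − p_k‖ ≥ 2r, with ‖p_{k+1} − p_k‖ = 2r for adjacent indices; (ii) ‖p_k‖ = D > 2r for every k; and (iii) the union of the closed disk of radius r centered at the origin with the closed disks of radius r centered at the points p_k is not a connected subset of ℝ². -/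
/-! Two ring points `2πj/n` and `2πk/n` apart in angle are at chord distance
`2D |sin (π (j - k) / n)| ≥ 2D sin (π / n) = 2r`, with equality for neighbours. Since
`sin (π / n) < sin (π / 6) = 1/2` for `n ≥ 7`, the radius `D` exceeds `2r`, so every ring disk
stays at distance `D - r > r` from the centre and the central disk is cut off from them. -/

open Real Metric

noncomputable def ringPt (D : ℝ) (n k : ℕ) : EuclideanSpace ℝ (Fin 2) :=
  pt (D * Real.cos (2 * π * k / n)) (D * Real.sin (2 * π * k / n))

lemma pt_sub_pt (a b c d : ℝ) : pt a b - pt c d = pt (a - c) (b - d) := by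
  ext i; fin_cases i <;> simp [pt]

lemma norm_ringPt (D : ℝ) (n k : ℕ) : ‖ringPt D n k‖ = |D| := by
  rw [ringPt, norm_pt, ← sqrt_sq_eq_abs]
  congr 1
  linear_combination D ^ 2 * sin_sq_add_cos_sq (2 * π * k / n)

lemma norm_pt_polar_sub_pt_polar (D θ φ : ℝ) :
    ‖pt (D * cos θ) (D * sin θ) - pt (D * cos φ) (D * sin φ)‖ =
      2 * |D| * |sin ((θ - φ) / 2)| := by
  have hcos : cos (θ - φ) = 1 - 2 * sin ((θ - φ) / 2) ^ 2 := by
    rw [← cos_two_mul_eq_one_sub]; ring_nf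
  rw [pt_sub_pt, norm_pt, ← abs_two, ← abs_mul, ← abs_mul, ← sqrt_sq_eq_abs, abs_two]
  congr 1
  linear_combination D ^ 2 * sin_sq_add_cos_sq θ + D ^ 2 * sin_sq_add_cos_sq φ
    + 2 * D ^ 2 * cos_sub θ φ - 2 * D ^ 2 * hcos

lemma norm_ringPt_sub_ringPt (D : ℝ) (n j k : ℕ) :
    ‖ringPt D n j - ringPt D n k‖ = 2 * |D| * |sin (π * ((j : ℝ) - k) / n)| := by
  rw [ringPt, ringPt, norm_pt_polar_sub_pt_polar]
  ring_nf

lemma sin_le_abs_sin {a x : ℝ} (ha : 0 ≤ a) (hax : a ≤ |x|) (hxa : |x| ≤ π - a) :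
    sin a ≤ |sin x| := by
  have habs : |sin x| = sin |x| := by
    rw [← abs_of_nonneg (sin_nonneg_of_nonneg_of_le_pi (abs_nonneg x) (by linarith))]
    rcases abs_choice x with h | h <;> simp [h, sin_neg]
  rw [habs]
  rcases le_or_gt |x| (π / 2) with hx | hx
  · exact sin_le_sin_of_le_of_le_pi_div_two (by linarith) hx hax
  · rw [← sin_pi_sub |x|]
    exact sin_le_sin_of_le_of_le_pi_div_two (by linarith) (by linarith) (by linarith)

lemma sin_pi_div_le_abs_sin_pi_mul_sub_div {n j k : ℕ} (hj : j < n) (hk : k < n) (hjk : j ≠ k) :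
    sin (π / n) ≤ |sin (π * ((j : ℝ) - k) / n)| := by
  have hn : (0 : ℝ) < n := by exact_mod_cast (show 0 < n by omega)
  have hdiff : 1 ≤ |(j : ℤ) - k| ∧ |(j : ℤ) - k| ≤ n - 1 := by
    refine ⟨Int.one_le_abs (sub_ne_zero.2 (by exact_mod_cast hjk)), abs_sub_le_iff.2 ⟨?_, ?_⟩⟩ <;>
      omega
  have h1 : (1 : ℝ) ≤ |(j : ℝ) - k| := by exact_mod_cast hdiff.1
  have h2 : |(j : ℝ) - k| ≤ n - 1 := by exact_mod_cast hdiff.2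
  have hx : |π * ((j : ℝ) - k) / n| = π * |(j : ℝ) - k| / n := by
    rw [abs_div, abs_mul, abs_of_pos pi_pos, abs_of_pos hn]
  apply sin_le_abs_sin (by positivity) <;> rw [hx]
  · exact div_le_div_of_nonneg_right (le_mul_of_one_le_right pi_pos.le h1) hn.le
  · rw [div_le_iff₀ hn, sub_mul, div_mul_cancel₀ _ hn.ne']
    nlinarith [pi_pos]

lemma sin_pi_div_lt_half {n : ℕ} (hn : 7 ≤ n) : sin (π / n) < 1 / 2 := by
  have hn' : (6 : ℝ) < n := by exact_mod_cast (show 6 < n by omega)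
  rw [← sin_pi_div_six]
  apply sin_lt_sin_of_lt_of_le_pi_div_two
  · linarith [show 0 ≤ π / n by positivity, pi_pos]
  · linarith [pi_pos]
  · exact div_lt_div_of_pos_left pi_pos (by norm_num) hn'

lemma not_isPreconnected_closedBall_union_iUnion_closedBall {X ι : Type*} [PseudoMetricSpace X]
    [Nonempty ι] {c : X} {p : ι → X} {r ρ : ℝ} (hr : 0 ≤ r) (hρ : 2 * r < ρ)
    (hp : ∀ i, ρ ≤ dist (p i) c) :
    ¬ IsPreconnected (closedBall c r ∪ ⋃ i, closedBall (p i) r) := by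
  intro hS
  obtain ⟨i⟩ := ‹Nonempty ι›
  -- the central disk lies in `ball c (ρ - r)`, every other disk outside `closedBall c r`
  obtain ⟨x, hxS, hxu, hxv⟩ := hS (ball c (ρ - r)) (closedBall c r)ᶜ isOpen_ball
    isClosed_closedBall.isOpen_compl
    (fun x _ => by
      by_cases h : dist x c ≤ r
      · exact .inl (mem_ball.2 (by linarith))
      · exact .inr h)
    ⟨c, .inl (mem_closedBall_self hr), mem_ball_self (by linarith)⟩
    ⟨p i, .inr (Set.mem_iUnion.2 ⟨i, mem_closedBall_self hr⟩),
      fun h => by linarith [hp i, mem_closedBall.1 h]⟩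
  simp only [mem_ball, Set.mem_compl_iff, mem_closedBall, not_le] at hxu hxv
  rcases hxS with h | h
  · linarith [mem_closedBall.1 h]
  · obtain ⟨j, hj⟩ := Set.mem_iUnion.1 h
    linarith [hp j, dist_triangle (p j) x c, dist_comm x (p j), mem_closedBall.1 hj]

/-- The bot-in-the-middle configuration with `n ≥ 7` ring robots at radius `D = r / sin(π/n)`
is collision-free (ring robots pairwise at distance `≥ 2r`, adjacent ones tangent at
distance `2r`, and all at distance `D > 2r` from the central robot at the origin), yet
the union of the disks is not connected. -/
theorem bot_in_the_middle_not_aggregated (r : ℝ) (hr : 0 < r) (n : ℕ) (hn : 7 ≤ n) :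
    (∀ j k : ℕ, j < n → k < n → j ≠ k →
      ‖ringPt (r / Real.sin (π / n)) n j - ringPt (r / Real.sin (π / n)) n k‖ ≥ 2 * r) ∧
    (∀ k : ℕ, k < n →
      ‖ringPt (r / Real.sin (π / n)) n (k + 1) - ringPt (r / Real.sin (π / n)) n k‖ = 2 * r) ∧
    (∀ k : ℕ, k < n → ‖ringPt (r / Real.sin (π / n)) n k‖ = r / Real.sin (π / n)) ∧
    r / Real.sin (π / n) > 2 * r ∧
    ¬ IsConnected
      (closedBall (0 : EuclideanSpace ℝ (Fin 2)) r ∪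
        ⋃ k : Fin n, closedBall (ringPt (r / Real.sin (π / n)) n k) r) := by
  have hs : 0 < sin (π / n) := sin_pos_of_pos_of_lt_pi (by positivity)
    (div_lt_self pi_pos (by exact_mod_cast (show 1 < n by omega)))
  set D := r / sin (π / n)
  have hD : 0 < D := div_pos hr hs
  have hDs : D * sin (π / n) = r := div_mul_cancel₀ r hs.ne'
  have hD2r : 2 * r < D := by
    rw [lt_div_iff₀ hs]; nlinarith [sin_pi_div_lt_half hn]
  refine ⟨fun j k hj hk hjk => ?_, fun k _ => ?_, fun k _ => ?_, hD2r, fun hC => ?_⟩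
  · rw [norm_ringPt_sub_ringPt, abs_of_pos hD]
    nlinarith [sin_pi_div_le_abs_sin_pi_mul_sub_div hj hk hjk]
  · rw [norm_ringPt_sub_ringPt, abs_of_pos hD]
    push_cast
    rw [add_sub_cancel_left, mul_one, abs_of_pos hs]
    linarith
  · rw [norm_ringPt, abs_of_pos hD]
  · have : Nonempty (Fin n) := ⟨⟨0, by omega⟩⟩
    refine not_isPreconnected_closedBall_union_iUnion_closedBall hr.le hD2r (fun k => ?_)
      hC.isPreconnected
    rw [dist_zero_right, norm_ringPt, abs_of_pos hD]
end

section
/- Let r > 0, d > r and s ≥ 0. Define the trajectories p(t) = (−(d + s·t), 0) and q(t) = (d + s·t, 0) for t ≥ 0, with the robot at p(t) having heading (1, 0) and the robot at q(t) having heading (−1, 0). Then for every t ≥ 0: (i) q(t) lies on the ray {p(t) + τ·(1, 0) : τ ≥ 0} and p(t) lies on the ray {q(t) + τ·(−1, 0) : τ ≥ 0}, so each robot's forward ray meets the other's disk; (ii) dist(p(t), q(t)) = 2(d + s·t) > 2r; and (iii) the union of the closed disks of radius r centered at p(t) and q(t) is not connected. -/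
open Metric

lemma pt_add_smul (a b c : ℝ) : pt a 0 + c • pt b 0 = pt (a + c * b) 0 := by
  ext i
  fin_cases i <;> simp [pt]

lemma dist_pt (a b : ℝ) : dist (pt a 0) (pt b 0) = |a - b| := by
  rw [EuclideanSpace.dist_eq]
  simp [pt, Fin.sum_univ_two, Real.sqrt_sq_eq_abs, Real.dist_eq]

lemma not_isPreconnected_closedBall_union {X : Type*} [PseudoMetricSpace X] {x y : X}
    {r₁ r₂ : ℝ} (h₁ : 0 ≤ r₁) (h₂ : 0 ≤ r₂) (h : r₁ + r₂ < dist x y) :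
    ¬ IsPreconnected (closedBall x r₁ ∪ closedBall y r₂) := by
  intro hconn
  obtain ⟨z, -, hz⟩ := isPreconnected_closed_iff.1 hconn _ _ isClosed_closedBall
    isClosed_closedBall subset_rfl
    ⟨x, Set.mem_union_left _ (mem_closedBall_self h₁), mem_closedBall_self h₁⟩
    ⟨y, Set.mem_union_right _ (mem_closedBall_self h₂), mem_closedBall_self h₂⟩
  exact Set.disjoint_left.1 (closedBall_disjoint_closedBall h) hz.1 hz.2

/-- Counterexample for XX-SB controllers: two robots facing each other at positions
`p t = (-(d + s·t), 0)` and `q t = (d + s·t, 0)` always have each other on their forward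
rays, recede forever (distance `2(d + s·t) > 2r`), and their disks never form a connected
union. -/
theorem facing_backwards_never_aggregate (r d s : ℝ) (hr : 0 < r) (hd : d > r) (hs : 0 ≤ s) :
    ∀ t : ℝ, 0 ≤ t →
      (∃ τ : ℝ, 0 ≤ τ ∧ pt (-(d + s * t)) 0 + τ • pt 1 0 = pt (d + s * t) 0) ∧
      (∃ τ : ℝ, 0 ≤ τ ∧ pt (d + s * t) 0 + τ • pt (-1) 0 = pt (-(d + s * t)) 0) ∧
      dist (pt (-(d + s * t)) 0) (pt (d + s * t) 0) = 2 * (d + s * t) ∧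
      2 * (d + s * t) > 2 * r ∧
      ¬ IsConnected (closedBall (pt (-(d + s * t)) 0) r ∪ closedBall (pt (d + s * t) 0) r) := by
  intro t ht
  set m := d + s * t
  have hrm : r < m := lt_add_of_lt_of_nonneg hd (mul_nonneg hs ht)
  have hdist : dist (pt (-m) 0) (pt m 0) = 2 * m := by
    rw [dist_pt, abs_of_nonpos (by linarith)]
    ring
  refine ⟨⟨2 * m, by linarith, ?_⟩, ⟨2 * m, by linarith, ?_⟩, hdist, by linarith, ?_⟩
  · rw [pt_add_smul]; ring_nf
  · rw [pt_add_smul]; ring_nf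
  · exact fun hconn => not_isPreconnected_closedBall_union hr.le hr.le (by linarith)
      hconn.isPreconnected
end

section
/- Let R > 0. For every φ ∈ [0, π/4] and every t ≥ 0, the point (x, y) = (R·(cos φ − 1) − t·sin φ, R·sin φ + t·cos φ) satisfies x ≤ 0 and x + y ≥ 0. -/
open Real Set

/-- A robot moving backwards along the circle of radius `R` centered at `(-R, 0)`, with
circle parameter `φ ∈ [0, π/4]` and heading `(-sin φ, cos φ)`, only sees points of its
forward ray `(R·(cos φ - 1) - t·sin φ, R·sin φ + t·cos φ)`, and all of these lie in the
quarter-plane `{(x, y) : x ≤ 0 ∧ x + y ≥ 0}`. -/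
theorem ray_in_quarter_plane (R : ℝ) (hR : 0 < R) :
    ∀ φ ∈ Icc (0 : ℝ) (π / 4), ∀ t : ℝ, 0 ≤ t →
      R * (Real.cos φ - 1) - t * Real.sin φ ≤ 0 ∧
      (R * (Real.cos φ - 1) - t * Real.sin φ) + (R * Real.sin φ + t * Real.cos φ) ≥ 0 := by
  rintro φ ⟨h0, h4⟩ t ht
  have hπ : φ ≤ π / 2 := h4.trans (by linarith [Real.pi_pos])
  have hs : 0 ≤ Real.sin φ := Real.sin_nonneg_of_nonneg_of_le_pi h0 (hπ.trans (by linarith [Real.pi_pos]))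
  have hs1 : Real.sin φ ≤ 1 := Real.sin_le_one φ
  have hc1 : Real.cos φ ≤ 1 := Real.cos_le_one φ
  have hcs : Real.sin φ ≤ Real.cos φ := by
    have h1 : Real.sin φ ≤ Real.sin (π/4) := Real.sin_le_sin_of_le_of_le_pi_div_two (by linarith [Real.pi_pos]) (by linarith [Real.pi_pos]) h4
    have h2 : Real.cos (π/4) ≤ Real.cos φ := Real.cos_le_cos_of_nonneg_of_le_pi h0 (by linarith [Real.pi_pos]) h4
    rw [Real.sin_pi_div_four] at h1; rw [Real.cos_pi_div_four] at h2; linarith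
  have hsum : 1 ≤ Real.cos φ + Real.sin φ := by
    nlinarith [Real.sin_sq_add_cos_sq φ]
  constructor
  · nlinarith
  · nlinarith
end
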